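/- arXiv:1303.5242 — 6 statements merged into one kernel-verified Lean document; each statement's English description precedes it below -/
import Mathlib

section
/- If {q_k} is a sequence of points in a domain Ω ⊆ C^n such that the balls B(q_k, c·δ̂(q_k)) are pairwise disjoint for some c ∈ (0, 1/2), then for any a, α > 0 the series ∑_k exp(-a·δ̂(q_k)^{-α}) converges. -/
/-!
Integrate the weight `(1 + ‖z‖)^{-r}`, `r > dim_ℝ ℂⁿ = 2n`, which is integrable, over the disjoint
balls `B_k = B(q_k, c·δ̂(q_k))`. Since `‖q_k‖ ≤ δ̂(q_k)⁻¹` and `δ̂ ≤ 1`, the weight is at least a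
constant times `δ̂(q_k)^r` on `B_k`, and `B_k` has volume a constant times `δ̂(q_k)^{2n}`; hence
`∑ δ̂(q_k)^s < ∞` for every `s > 4n`. Finally `exp(-a x^{-α}) ≤ N! a^{-N} x^{αN}` (one term of
the exponential series) with `αN > 4n`.
-/

open Function MeasureTheory Metric Module

theorem summable_measure_toReal_mul_of_pairwise_disjoint {X ι : Type*} [MeasurableSpace X]
    [Countable ι] {μ : Measure X} {s : ι → Set X} (hs : ∀ k, MeasurableSet (s k))
    (hd : Pairwise (Disjoint on s)) {f : X → ℝ} (hf : Integrable f μ) {w : ι → ℝ}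
    (hw : ∀ k, 0 ≤ w k) (hwf : ∀ k, ∀ x ∈ s k, w k ≤ f x) :
    Summable fun k => w k * (μ (s k)).toReal := by
  have hpiece : ∀ k, ENNReal.ofReal (w k) * μ (s k) ≤ ∫⁻ x in s k, ENNReal.ofReal (f x) ∂μ :=
    fun k => by
      rw [← setLIntegral_const]
      exact setLIntegral_mono' (hs k) fun x hx => ENNReal.ofReal_le_ofReal (hwf k x hx)
  have htotal : ∑' k, ENNReal.ofReal (w k) * μ (s k) ≠ ⊤ := by
    refine ne_top_of_le_ne_top hf.lintegral_lt_top.ne ?_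
    calc ∑' k, ENNReal.ofReal (w k) * μ (s k)
        ≤ ∑' k, ∫⁻ x in s k, ENNReal.ofReal (f x) ∂μ := ENNReal.tsum_le_tsum hpiece
      _ = ∫⁻ x in ⋃ k, s k, ENNReal.ofReal (f x) ∂μ := (lintegral_iUnion hs hd _).symm
      _ ≤ ∫⁻ x, ENNReal.ofReal (f x) ∂μ := setLIntegral_le_lintegral _ _
  simpa only [ENNReal.toReal_mul, ENNReal.toReal_ofReal (hw _)] using
    ENNReal.summable_toReal htotal

theorem exp_neg_mul_rpow_neg_le {a x : ℝ} (ha : 0 < a) (hx : 0 < x) (α : ℝ) (N : ℕ) :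
    Real.exp (-a * x ^ (-α)) ≤ N.factorial / a ^ N * x ^ (α * N) := by
  set y := a * x ^ (-α)
  have hy : 0 < y := by positivity
  have hyN : y ^ N = a ^ N * (x ^ (α * N))⁻¹ := by
    rw [mul_pow, ← Real.rpow_natCast (x ^ (-α)), ← Real.rpow_mul hx.le, neg_mul,
      Real.rpow_neg hx.le]
  calc Real.exp (-a * x ^ (-α)) = (Real.exp y)⁻¹ := by rw [neg_mul, Real.exp_neg]
    _ ≤ (y ^ N / N.factorial)⁻¹ :=
        inv_anti₀ (by positivity) (Real.pow_div_factorial_le_exp y hy.le N)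
    _ = N.factorial / a ^ N * x ^ (α * N) := by
        rw [inv_div, hyN]
        field_simp

theorem one_add_norm_mul_le_of_mem_ball {E : Type*} [SeminormedAddCommGroup E] {p z : E}
    {ρ c : ℝ} (hc : 0 ≤ c) (hρ : 0 < ρ) (hρ1 : ρ ≤ 1) (hp : ‖p‖ ≤ ρ⁻¹) (hz : z ∈ ball p (c * ρ)) :
    (1 + ‖z‖) * ρ ≤ 2 + c := by
  have hpρ : ‖p‖ * ρ ≤ 1 := by rw [← le_div_iff₀ hρ, one_div]; exact hp
  have hz' : ‖z‖ ≤ ‖p‖ + c * ρ := norm_le_of_mem_closedBall (ball_subset_closedBall hz)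
  nlinarith [mul_le_mul_of_nonneg_right hz' hρ.le, mul_le_mul_of_nonneg_left hρ1 hc,
    mul_le_mul_of_nonneg_left hρ1 (mul_nonneg hc hρ.le)]

theorem summable_rpow_of_pairwise_disjoint_balls {E ι : Type*} [NormedAddCommGroup E]
    [NormedSpace ℝ E] [FiniteDimensional ℝ E] [MeasurableSpace E] [BorelSpace E] [Countable ι]
    {p : ι → E} {ρ : ι → ℝ} {c : ℝ} (hc : 0 < c) (hρ : ∀ k, 0 < ρ k) (hρ1 : ∀ k, ρ k ≤ 1)
    (hp : ∀ k, ‖p k‖ ≤ (ρ k)⁻¹) (hd : Pairwise (Disjoint on fun k => ball (p k) (c * ρ k)))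
    {s : ℝ} (hs : 2 * finrank ℝ E < s) :
    Summable fun k => ρ k ^ s := by
  set d := finrank ℝ E
  have hd0 : (0 : ℝ) ≤ d := d.cast_nonneg
  set r := s - d
  have hr : (d : ℝ) < r := by linarith
  let μ : Measure E := Measure.addHaar
  set V := (μ (ball 0 1)).toReal
  have hV : 0 < V := ENNReal.toReal_pos (measure_ball_pos μ 0 one_pos).ne' measure_ball_lt_top.ne
  have hball : ∀ k, (μ (ball (p k) (c * ρ k))).toReal = (c * ρ k) ^ d * V := fun k => by
    have := hρ k
    rw [Measure.addHaar_ball_of_pos μ _ (by positivity), ENNReal.toReal_mul,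
      ENNReal.toReal_ofReal (by positivity)]
  have hweight : ∀ k, ∀ z ∈ ball (p k) (c * ρ k), (ρ k / (2 + c)) ^ r ≤ (1 + ‖z‖) ^ (-r) := by
    intro k z hz
    have hρk := hρ k
    rw [Real.rpow_neg (by positivity), ← Real.inv_rpow (by positivity)]
    refine Real.rpow_le_rpow (by positivity) ?_ (by linarith)
    rw [le_inv_comm₀ (by positivity) (by positivity), inv_div, le_div_iff₀ hρk]
    exact one_add_norm_mul_le_of_mem_ball hc.le hρk (hρ1 k) (hp k) hz
  have hsum := summable_measure_toReal_mul_of_pairwise_disjoint (μ := μ)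
    (fun k => measurableSet_ball) hd (integrable_one_add_norm hr)
    (fun k => Real.rpow_nonneg (div_nonneg (hρ k).le (by positivity)) r) hweight
  have hC : 0 < c ^ d * V / (2 + c) ^ r := by positivity
  refine (summable_mul_left_iff hC.ne').mp (hsum.congr fun k => ?_)
  have hρk := hρ k
  have hs_split : ρ k ^ s = ρ k ^ r * ρ k ^ d := by
    rw [← Real.rpow_natCast, ← Real.rpow_add hρk, sub_add_cancel]
  rw [hball, hs_split, Real.div_rpow hρk.le (by positivity), mul_pow]
  field_simp

theorem le_one_of_le_inv_sqrt_one_add_sq {t x : ℝ} (h : t ≤ (√(1 + x ^ 2))⁻¹) : t ≤ 1 :=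
  h.trans (inv_le_one_of_one_le₀ (Real.one_le_sqrt.mpr (by nlinarith [sq_nonneg x])))

theorem le_inv_of_le_inv_sqrt_one_add_sq {t x : ℝ} (ht : 0 < t) (h : t ≤ (√(1 + x ^ 2))⁻¹) :
    x ≤ t⁻¹ :=
  calc x ≤ |x| := le_abs_self x
    _ ≤ √(1 + x ^ 2) := Real.abs_le_sqrt (by linarith)
    _ ≤ t⁻¹ := (le_inv_comm₀ ht (by positivity)).mp h

theorem summable_exp_neg_rpow_deltaHat_general {n : ℕ} (Ω : Set (EuclideanSpace ℂ (Fin n)))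
    (hΩopen : IsOpen Ω) (hΩc : Ωᶜ.Nonempty)
    (δhat : EuclideanSpace ℂ (Fin n) → ℝ)
    (hδhat : ∀ z, δhat z = min (Metric.infDist z Ωᶜ) ((Real.sqrt (1 + ‖z‖ ^ 2))⁻¹))
    (q : ℕ → EuclideanSpace ℂ (Fin n)) (hq : ∀ k, q k ∈ Ω)
    (c : ℝ) (hc0 : 0 < c)
    (hdisj : Pairwise fun k l =>
      Disjoint (Metric.ball (q k) (c * δhat (q k))) (Metric.ball (q l) (c * δhat (q l))))
    (a α : ℝ) (ha : 0 < a) (hα : 0 < α) :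
    Summable fun k => Real.exp (-a * δhat (q k) ^ (-α)) := by
  have hδ_pos : ∀ k, 0 < δhat (q k) := fun k => by
    rw [hδhat]
    exact lt_min ((hΩopen.isClosed_compl.notMem_iff_infDist_pos hΩc).mp fun h => h (hq k))
      (by positivity)
  have hδ_le : ∀ k, δhat (q k) ≤ (√(1 + ‖q k‖ ^ 2))⁻¹ := fun k =>
    (hδhat _).le.trans (min_le_right _ _)
  obtain ⟨N, hN⟩ := exists_nat_gt (2 * finrank ℝ (EuclideanSpace ℂ (Fin n)) / α)
  have hsum := summable_rpow_of_pairwise_disjoint_balls hc0 hδ_pos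
    (fun k => le_one_of_le_inv_sqrt_one_add_sq (hδ_le k))
    (fun k => le_inv_of_le_inv_sqrt_one_add_sq (hδ_pos k) (hδ_le k)) hdisj
    (s := α * N) (by rw [div_lt_iff₀ hα] at hN; linarith)
  exact (hsum.mul_left _).of_nonneg_of_le (fun k => (Real.exp_pos _).le) fun k =>
    exp_neg_mul_rpow_neg_le ha (hδ_pos k) α N

/-- if the balls B(q_k, c·δ̂(q_k)) are pairwise disjoint for some
0 < c < 1/2, then ∑_k exp(-a·δ̂(q_k)^{-α}) < ∞ for all a, α > 0. -/
theorem summable_exp_neg_rpow_deltaHat {n : ℕ} (Ω : Set (EuclideanSpace ℂ (Fin n)))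
    (hΩopen : IsOpen Ω) (hΩconn : IsConnected Ω) (hΩc : Ωᶜ.Nonempty)
    (δhat : EuclideanSpace ℂ (Fin n) → ℝ)
    (hδhat : ∀ z, δhat z = min (Metric.infDist z Ωᶜ) ((Real.sqrt (1 + ‖z‖ ^ 2))⁻¹))
    (q : ℕ → EuclideanSpace ℂ (Fin n)) (hq : ∀ k, q k ∈ Ω)
    (c : ℝ) (hc0 : 0 < c) (hc : c < 1 / 2)
    (hdisj : Pairwise fun k l =>
      Disjoint (Metric.ball (q k) (c * δhat (q k))) (Metric.ball (q l) (c * δhat (q l))))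
    (a α : ℝ) (ha : 0 < a) (hα : 0 < α) :
    Summable fun k => Real.exp (-a * δhat (q k) ^ (-α)) :=
  summable_exp_neg_rpow_deltaHat_general Ω hΩopen hΩc δhat hδhat q hq c hc0 hdisj a α ha hα
end

section
/- Let t_1 = 1 - e^{-2} and t_{j+1} = t_j + (1 - t_j)·|log(1 - t_j)|^{-1}. Then {t_j} is an increasing sequence in (0,1) and t_j → 1 as j → ∞. -/
/-!
On `(1 - e⁻¹, 1)` we have `|log (1 - x)| > 1`, so the step `(1 - x) / |log (1 - x)|` is positive
and smaller than `1 - x`: the map `x ↦ x + (1 - x) / |log (1 - x)|` sends this interval into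
itself and moves every point up. Since `t₁ = 1 - e⁻²` lies in it, the sequence increases to a
limit `L ≤ 1`; if `L < 1`, continuity would make `L` a fixed point of the map, which has none
there.
-/

open Filter Real Set Topology

noncomputable def logStep (x : ℝ) : ℝ := x + (1 - x) * |log (1 - x)|⁻¹

lemma log_one_sub_ne_zero {x : ℝ} (hx0 : x ≠ 0) (hx1 : x < 1) : log (1 - x) ≠ 0 :=
  log_ne_zero_of_pos_of_ne_one (by linarith) (by contrapose! hx0; linarith)

lemma lt_logStep {x : ℝ} (hx0 : x ≠ 0) (hx1 : x < 1) : x < logStep x := by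
  have hlog := log_one_sub_ne_zero hx0 hx1
  have hstep : 0 < (1 - x) * |log (1 - x)|⁻¹ := mul_pos (by linarith) (by positivity)
  unfold logStep
  linarith

lemma continuousAt_logStep {x : ℝ} (hx0 : x ≠ 0) (hx1 : x < 1) : ContinuousAt logStep x := by
  have hlog := log_one_sub_ne_zero hx0 hx1
  have hx1_ne : 1 - x ≠ 0 := by linarith
  have habs : |log (1 - x)| ≠ 0 := abs_ne_zero.2 hlog
  unfold logStep
  fun_prop (disch := assumption)

lemma one_sub_exp_neg_one_pos : 0 < 1 - exp (-1) := by
  have : exp (-1) < 1 := exp_lt_one_iff.mpr (by norm_num)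
  linarith

lemma one_lt_abs_log_one_sub {x : ℝ} (hx : x ∈ Ioo (1 - exp (-1)) 1) : 1 < |log (1 - x)| := by
  have hlog : log (1 - x) < -1 := by
    rw [log_lt_iff_lt_exp (by linarith [hx.2])]
    linarith [hx.1]
  rw [abs_of_neg (by linarith)]
  linarith

lemma logStep_lt_one {x : ℝ} (hx : x ∈ Ioo (1 - exp (-1)) 1) : logStep x < 1 := by
  have hinv : |log (1 - x)|⁻¹ < 1 := inv_lt_one_of_one_lt₀ (one_lt_abs_log_one_sub hx)
  have hstep : (1 - x) * |log (1 - x)|⁻¹ < 1 - x :=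
    mul_lt_of_lt_one_right (by linarith [hx.2]) hinv
  unfold logStep
  linarith

lemma mapsTo_logStep : MapsTo logStep (Ioo (1 - exp (-1)) 1) (Ioo (1 - exp (-1)) 1) :=
  fun _ hx => ⟨hx.1.trans (lt_logStep (one_sub_exp_neg_one_pos.trans hx.1).ne' hx.2),
    logStep_lt_one hx⟩

lemma tendsto_iterate_logStep {x : ℝ} (hx : x ∈ Ioo (1 - exp (-1)) 1) :
    Tendsto (fun n => logStep^[n] x) atTop (𝓝 1) := by
  have hmem : ∀ n, logStep^[n] x ∈ Ioo (1 - exp (-1)) 1 := fun n => mapsTo_logStep.iterate n hx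
  have hpos : ∀ n, 0 < logStep^[n] x := fun n => one_sub_exp_neg_one_pos.trans (hmem n).1
  have hmono : Monotone fun n => logStep^[n] x := monotone_nat_of_le_succ fun n => by
    rw [Function.iterate_succ_apply']
    exact (lt_logStep (hpos n).ne' (hmem n).2).le
  have hbdd : BddAbove (range fun n => logStep^[n] x) :=
    ⟨1, forall_mem_range.2 fun n => (hmem n).2.le⟩
  have hlim := tendsto_atTop_ciSup hmono hbdd
  have hL1 : ⨆ n, logStep^[n] x ≤ 1 := ciSup_le fun n => (hmem n).2.le
  have hL0 : 0 < ⨆ n, logStep^[n] x := (hpos 0).trans_le (le_ciSup hbdd 0)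
  rcases hL1.lt_or_eq with hL | hL
  · have hfix := isFixedPt_of_tendsto_iterate hlim (continuousAt_logStep hL0.ne' hL)
    exact absurd hfix (lt_logStep hL0.ne' hL).ne'
  · rwa [hL] at hlim

/-- t₁ = 1 - e⁻², t_{j+1} = t_j + (1-t_j)|log(1-t_j)|⁻¹ is an
increasing sequence in (0,1) converging to 1. -/
theorem seq_increasing_tendsto_one (t : ℕ → ℝ)
    (h1 : t 1 = 1 - Real.exp (-2))
    (hrec : ∀ j ≥ 1, t (j + 1) = t j + (1 - t j) * |Real.log (1 - t j)|⁻¹) :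
    (∀ j ≥ 1, t j ∈ Set.Ioo (0 : ℝ) 1) ∧ (∀ j ≥ 1, t j < t (j + 1)) ∧
      Tendsto t atTop (nhds 1) := by
  have horbit : ∀ n, t (n + 1) = logStep^[n] (t 1) := by
    intro n
    induction n with
    | zero => rfl
    | succ n ih => rw [hrec (n + 1) (by omega), Function.iterate_succ_apply', ← ih]; rfl
  have ht1 : t 1 ∈ Ioo (1 - exp (-1)) 1 := by
    rw [h1]
    have hexp : exp (-2) < exp (-1) := exp_lt_exp.mpr (by norm_num)
    exact ⟨by linarith, by linarith [exp_pos (-2)]⟩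
  have hmem : ∀ j ≥ 1, t j ∈ Ioo (1 - exp (-1)) 1 := fun j hj => by
    obtain ⟨n, rfl⟩ := Nat.exists_eq_add_of_le' hj
    rw [horbit]
    exact mapsTo_logStep.iterate n ht1
  have hpos : ∀ j ≥ 1, 0 < t j := fun j hj => one_sub_exp_neg_one_pos.trans (hmem j hj).1
  refine ⟨fun j hj => ⟨hpos j hj, (hmem j hj).2⟩, fun j hj => ?_, ?_⟩
  · rw [hrec j hj]
    exact lt_logStep (hpos j hj).ne' (hmem j hj).2
  · rw [← tendsto_add_atTop_iff_nat 1]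
    exact (tendsto_iterate_logStep ht1).congr fun n => (horbit n).symm
end

section
/- With t_j as above, the hyperbolic (Poincaré) distance in the unit disc between t_j and t_{j+1}, namely log((1 + ρ_j)/(1 - ρ_j)) where ρ_j = |t_{j+1} - t_j|/|1 - t_j t_{j+1}|, tends to 0 as j → ∞. -/
open Filter Real

/-!
With `L_j = |log (1 - t_j)|` the recursion reads `1 - t_{j+1} = (1 - t_j)(1 - 1/L_j)`, and
`log (1 - x) ≤ -x` gives `L_{j+1} ≥ L_j + 1/L_j`, hence `L_{j+1}² ≥ L_j² + 2` and `L_j → ∞`.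
Since `1 - t_j t_{j+1} ≥ 1 - t_j`, the pseudo-hyperbolic distance `ρ_j` is at most
`(t_{j+1} - t_j)/(1 - t_j) = 1/L_j`, so `ρ_j → 0` and with it `log ((1 + ρ_j)/(1 - ρ_j))`.
-/

noncomputable def pseudoHyperbolic (a b : ℝ) : ℝ := |b - a| / |1 - a * b|

lemma pseudoHyperbolic_le_of_le {a b : ℝ} (ha : 0 ≤ a) (hab : a ≤ b) (hb : b ≤ 1) (ha1 : a < 1) :
    pseudoHyperbolic a b ≤ (b - a) / (1 - a) := by
  have hden : 1 - a ≤ 1 - a * b := by nlinarith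
  rw [pseudoHyperbolic, abs_of_nonneg (sub_nonneg.2 hab), abs_of_pos (by linarith)]
  exact div_le_div_of_nonneg_left (sub_nonneg.2 hab) (sub_pos.2 ha1) hden

lemma tendsto_log_one_add_div_one_sub {α : Type*} {l : Filter α} {ρ : α → ℝ}
    (hρ : Tendsto ρ l (nhds 0)) :
    Tendsto (fun x => log ((1 + ρ x) / (1 - ρ x))) l (nhds 0) := by
  have hcont : ContinuousAt (fun r : ℝ => log ((1 + r) / (1 - r))) 0 := by
    fun_prop (disch := norm_num)
  simpa [Function.comp_def] using hcont.tendsto.comp hρ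

lemma neg_log_add_inv_le_neg_log_mul {s L : ℝ} (hs : 0 < s) (hL : 1 < L) :
    -log s + L⁻¹ ≤ -log (s * (1 - L⁻¹)) := by
  have h : 0 < 1 - L⁻¹ := sub_pos.2 (inv_lt_one_of_one_lt₀ hL)
  rw [log_mul hs.ne' h.ne']
  linarith [log_le_sub_one_of_pos h]

lemma sq_add_two_le_sq_add_inv {L : ℝ} (hL : L ≠ 0) : L ^ 2 + 2 ≤ (L + L⁻¹) ^ 2 := by
  have : (L + L⁻¹) ^ 2 = L ^ 2 + 2 + L⁻¹ ^ 2 := by field_simp; ring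
  nlinarith [sq_nonneg L⁻¹]

section Sequence

variable {t : ℕ → ℝ}

lemma one_sub_mem_Ioo_and_sq_abs_log_ge (h1 : t 1 = 1 - exp (-2))
    (hrec : ∀ j ≥ 1, t (j + 1) = t j + (1 - t j) * |log (1 - t j)|⁻¹) {j : ℕ} (hj : 1 ≤ j) :
    1 - t j ∈ Set.Ioo 0 1 ∧ 2 * (j : ℝ) + 2 ≤ |log (1 - t j)| ^ 2 := by
  induction j, hj using Nat.le_induction with
  | base =>
    rw [h1, sub_sub_cancel, log_exp]
    exact ⟨⟨exp_pos _, exp_lt_one_iff.2 (by norm_num)⟩, by norm_num⟩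
  | succ j hj ih =>
    obtain ⟨⟨hu, hu1⟩, hsq⟩ := ih
    set L := |log (1 - t j)|
    have hL1 : 1 < L := by nlinarith [abs_nonneg (log (1 - t j))]
    have hstep : 1 - t (j + 1) = (1 - t j) * (1 - L⁻¹) := by rw [hrec j hj]; ring
    have hfac : 0 < 1 - L⁻¹ := sub_pos.2 (inv_lt_one_of_one_lt₀ hL1)
    have hpos : 0 < 1 - t (j + 1) := hstep ▸ mul_pos hu hfac
    have hlt : 1 - t (j + 1) < 1 := by
      rw [hstep]; nlinarith [inv_pos.2 (zero_lt_one.trans hL1)]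
    have hgrow : L + L⁻¹ ≤ |log (1 - t (j + 1))| := by
      rw [abs_of_neg (log_neg hpos hlt), hstep]
      have := neg_log_add_inv_le_neg_log_mul hu hL1
      rwa [← abs_of_neg (log_neg hu hu1)] at this
    refine ⟨⟨hpos, hlt⟩, ?_⟩
    calc 2 * ((j + 1 : ℕ) : ℝ) + 2 = (2 * j + 2) + 2 := by push_cast; ring
      _ ≤ L ^ 2 + 2 := by linarith
      _ ≤ (L + L⁻¹) ^ 2 := sq_add_two_le_sq_add_inv (by positivity)
      _ ≤ |log (1 - t (j + 1))| ^ 2 := by gcongr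

lemma tendsto_abs_log_one_sub_atTop (h1 : t 1 = 1 - exp (-2))
    (hrec : ∀ j ≥ 1, t (j + 1) = t j + (1 - t j) * |log (1 - t j)|⁻¹) :
    Tendsto (fun j => |log (1 - t j)|) atTop atTop := by
  refine tendsto_atTop_mono' atTop ?_ (tendsto_sqrt_atTop.comp tendsto_natCast_atTop_atTop)
  filter_upwards [eventually_ge_atTop 1] with j hj
  have hsq := (one_sub_mem_Ioo_and_sq_abs_log_ge h1 hrec hj).2
  calc √(j : ℝ) ≤ √(|log (1 - t j)| ^ 2) := sqrt_le_sqrt (by linarith)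
    _ = |log (1 - t j)| := sqrt_sq (abs_nonneg _)

lemma pseudoHyperbolic_succ_le (h1 : t 1 = 1 - exp (-2))
    (hrec : ∀ j ≥ 1, t (j + 1) = t j + (1 - t j) * |log (1 - t j)|⁻¹) {j : ℕ} (hj : 1 ≤ j) :
    pseudoHyperbolic (t j) (t (j + 1)) ≤ |log (1 - t j)|⁻¹ := by
  obtain ⟨⟨hu, hu1⟩, -⟩ := one_sub_mem_Ioo_and_sq_abs_log_ge h1 hrec hj
  obtain ⟨⟨hu', -⟩, -⟩ := one_sub_mem_Ioo_and_sq_abs_log_ge h1 hrec (hj.trans j.le_succ)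
  have hincr : t (j + 1) - t j = (1 - t j) * |log (1 - t j)|⁻¹ := by rw [hrec j hj]; ring
  have hmono : t j ≤ t (j + 1) := sub_nonneg.1 (hincr ▸ by positivity)
  calc pseudoHyperbolic (t j) (t (j + 1)) ≤ (t (j + 1) - t j) / (1 - t j) :=
        pseudoHyperbolic_le_of_le (by linarith) hmono (by linarith) (by linarith)
    _ = |log (1 - t j)|⁻¹ := by rw [hincr]; field_simp

end Sequence

/-- with t_j as in Lemma 5.5, the Poincaré distance
log((1+ρ_j)/(1-ρ_j)), ρ_j = |t_{j+1}-t_j|/|1-t_j t_{j+1}|, tends to 0. -/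
theorem poincare_distance_tendsto_zero (t : ℕ → ℝ)
    (h1 : t 1 = 1 - Real.exp (-2))
    (hrec : ∀ j ≥ 1, t (j + 1) = t j + (1 - t j) * |Real.log (1 - t j)|⁻¹) :
    Tendsto (fun j =>
        Real.log ((1 + |t (j + 1) - t j| / |1 - t j * t (j + 1)|) /
          (1 - |t (j + 1) - t j| / |1 - t j * t (j + 1)|)))
      atTop (nhds 0) := by
  have hρ : Tendsto (fun j => pseudoHyperbolic (t j) (t (j + 1))) atTop (nhds 0) :=
    squeeze_zero' (Eventually.of_forall fun j => by unfold pseudoHyperbolic; positivity)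
      ((eventually_ge_atTop 1).mono fun j hj => pseudoHyperbolic_succ_le h1 hrec hj)
      (tendsto_abs_log_one_sub_atTop h1 hrec).inv_tendsto_atTop
  exact tendsto_log_one_add_div_one_sub hρ
end

section
/- If Ω ⊆ C^n is a domain, f : Ω → C is holomorphic, and the set of Picard points of f on ∂Ω is dense in ∂Ω, then every point of ∂Ω is a Picard point of f. Equivalently, the set of Picard points of f in ∂Ω is closed in ∂Ω. -/
/-- A point `p` of the boundary of `Ω` is a Picard point of `f` if on every
neighborhood `U` of `p`, the restriction of `f` to `Ω ∩ U` attains every complex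
value infinitely often, with at most one exception. -/
def IsPicardPoint {n : ℕ} (Ω : Set (EuclideanSpace ℂ (Fin n)))
    (f : EuclideanSpace ℂ (Fin n) → ℂ) (p : EuclideanSpace ℂ (Fin n)) : Prop :=
  p ∈ frontier Ω ∧ ∀ U ∈ nhds p,
    {w : ℂ | ¬ {z | z ∈ Ω ∩ U ∧ f z = w}.Infinite}.Subsingleton

/-!
Being a Picard point is a condition on every neighbourhood `U` of `p` that only gets weaker as
`U` grows, and every neighbourhood of a limit of Picard points contains an open neighbourhood of
one of them. Hence the Picard points form a closed set, and density forces it to contain `∂Ω`.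
-/

open Topology

theorem isClosed_setOf_forall_mem_nhds {X : Type*} [TopologicalSpace X] {Q : Set X → Prop}
    (hQ : Monotone Q) : IsClosed {p | ∀ U ∈ 𝓝 p, Q U} := by
  refine closure_subset_iff_isClosed.mp fun p hp U hU => ?_
  obtain ⟨q, hqU, hq⟩ := mem_closure_iff_nhds.mp hp (interior U) (interior_mem_nhds.mpr hU)
  exact hQ interior_subset (hq _ (isOpen_interior.mem_nhds hqU))

section Picard

variable {n : ℕ} (Ω : Set (EuclideanSpace ℂ (Fin n))) (f : EuclideanSpace ℂ (Fin n) → ℂ)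

theorem monotone_subsingleton_setOf_not_infinite_fiber :
    Monotone fun U : Set (EuclideanSpace ℂ (Fin n)) =>
      {w : ℂ | ¬ {z | z ∈ Ω ∩ U ∧ f z = w}.Infinite}.Subsingleton := by
  intro U V hUV hU w hw w' hw'
  have finite_of_finite : ∀ v : ℂ, ¬ {z | z ∈ Ω ∩ V ∧ f z = v}.Infinite →
      ¬ {z | z ∈ Ω ∩ U ∧ f z = v}.Infinite := fun v hV hU =>
    hV (hU.mono fun z hz => ⟨⟨hz.1.1, hUV hz.1.2⟩, hz.2⟩)
  exact hU (finite_of_finite w hw) (finite_of_finite w' hw')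

theorem isClosed_setOf_isPicardPoint : IsClosed {p | IsPicardPoint Ω f p} :=
  isClosed_frontier.inter
    (isClosed_setOf_forall_mem_nhds (monotone_subsingleton_setOf_not_infinite_fiber Ω f))

end Picard

theorem picardPoints_closed_general {n : ℕ} (Ω : Set (EuclideanSpace ℂ (Fin n)))
    (f : EuclideanSpace ℂ (Fin n) → ℂ)
    (hdense : frontier Ω ⊆ closure {p | IsPicardPoint Ω f p}) :
    (∀ p ∈ frontier Ω, IsPicardPoint Ω f p) ∧
      IsClosed {p | IsPicardPoint Ω f p} := by
  have hclosed := isClosed_setOf_isPicardPoint Ω f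
  exact ⟨fun p hp => hclosed.closure_subset (hdense hp), hclosed⟩

/-- if the set of Picard points of a holomorphic `f : Ω → ℂ` is dense
in ∂Ω, then every point of ∂Ω is a Picard point; indeed the set of Picard points
is closed. -/
theorem picardPoints_closed {n : ℕ} (Ω : Set (EuclideanSpace ℂ (Fin n)))
    (hΩopen : IsOpen Ω) (hΩconn : IsConnected Ω)
    (f : EuclideanSpace ℂ (Fin n) → ℂ) (hf : DifferentiableOn ℂ f Ω)
    (hdense : frontier Ω ⊆ closure {p | IsPicardPoint Ω f p}) :
    (∀ p ∈ frontier Ω, IsPicardPoint Ω f p) ∧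
      IsClosed {p | IsPicardPoint Ω f p} :=
  picardPoints_closed_general Ω f hdense
end

section
/- If F : C → M is a holomorphic map with dense image into a complex manifold M, then every negative continuous plurisubharmonic function on M is constant. -/
open scoped Manifold

def SubharmonicFun (u : ℂ → ℝ) : Prop :=
  UpperSemicontinuous u ∧ ∀ z : ℂ, ∀ r : ℝ, 0 < r →
    u z ≤ (1 / (2 * Real.pi)) *
      ∫ θ in (0 : ℝ)..(2 * Real.pi), u (z + (r : ℂ) * Complex.exp ((θ : ℂ) * Complex.I))

/-!
With `u = ψ ∘ F`, which is continuous, negative and satisfies the sub-mean-value inequality on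
every circle, it suffices to prove Liouville's theorem for such functions: `ψ` is then constant on
the dense set `F(ℂ)`, hence everywhere. Let `m` be the maximum of `u` on the closed unit disc.
Since `log ‖·‖` is harmonic away from `0`, `u - ε log ‖·‖` still has the sub-mean-value property
on the annulus `1 ≤ ‖z‖ ≤ R`, and by the maximum principle it is at most `m` there as soon as
`ε log R ≥ sup u - m`. Letting `ε → 0` gives `u ≤ m` everywhere, and a global maximum of a
continuous sub-mean-value function propagates to every circle around it, so `u` is constant.
-/

open Real Metric Set Filter Topology

theorem circleAverage_lt_of_forall_le_of_exists_lt {f : ℂ → ℝ} {c : ℂ} {r a : ℝ}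
    (hf : ContinuousOn f (sphere c |r|)) (hle : ∀ w ∈ sphere c |r|, f w ≤ a)
    (hlt : ∃ w ∈ sphere c |r|, f w < a) :
    circleAverage f c r < a := by
  obtain ⟨_, ⟨θ, hθ, rfl⟩, hθlt⟩ := image_circleMap_Ioc c r ▸ hlt
  have hfc : ContinuousOn (fun θ ↦ f (circleMap c r θ)) (Icc 0 (2 * π)) :=
    hf.comp_continuous (continuous_circleMap c r) (circleMap_mem_sphere' c r) |>.continuousOn
  have hintegral := intervalIntegral.integral_lt_integral_of_continuousOn_of_le_of_exists_lt
    two_pi_pos hfc continuousOn_const (fun θ _ ↦ hle _ (circleMap_mem_sphere' c r θ))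
    ⟨θ, Ioc_subset_Icc_self hθ, hθlt⟩
  rw [← circleAverage_const a c r, circleAverage_def, circleAverage_def, smul_eq_mul, smul_eq_mul]
  exact mul_lt_mul_of_pos_left hintegral (inv_pos.mpr two_pi_pos)

theorem eq_on_sphere_of_le_circleAverage {f : ℂ → ℝ} {c : ℂ} {r : ℝ}
    (hf : ContinuousOn f (sphere c |r|)) (hmax : ∀ w ∈ sphere c |r|, f w ≤ f c)
    (hc : f c ≤ circleAverage f c r) :
    ∀ w ∈ sphere c |r|, f w = f c := by
  by_contra! ⟨w, hw, hne⟩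
  exact (circleAverage_lt_of_forall_le_of_exists_lt hf hmax
    ⟨w, hw, (hmax w hw).lt_of_ne hne⟩).not_ge hc

theorem IsCompact.exists_isMaxOn_lex {X α β : Type*} [TopologicalSpace X] [T2Space X]
    [LinearOrder α] [TopologicalSpace α] [OrderClosedTopology α]
    [LinearOrder β] [TopologicalSpace β] [OrderClosedTopology β]
    {K : Set X} (hK : IsCompact K) (hne : K.Nonempty) {f : X → α} {g : X → β}
    (hf : ContinuousOn f K) (hg : ContinuousOn g K) :
    ∃ x ∈ K, IsMaxOn f K x ∧ IsMaxOn g (K ∩ f ⁻¹' {f x}) x := by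
  obtain ⟨x₁, hx₁K, hx₁⟩ := hK.exists_isMaxOn hne hf
  have hS : IsCompact (K ∩ f ⁻¹' {f x₁}) :=
    hK.of_isClosed_subset (hf.preimage_isClosed_of_isClosed hK.isClosed isClosed_singleton)
      inter_subset_left
  obtain ⟨x, ⟨hxK, hfx⟩, hx⟩ := hS.exists_isMaxOn ⟨x₁, hx₁K, rfl⟩ (hg.mono inter_subset_left)
  rw [mem_preimage, mem_singleton_iff] at hfx
  exact ⟨x, hxK, fun y hy ↦ hfx ▸ hx₁ hy, hfx ▸ hx⟩

theorem norm_circleMap_arg (w : ℂ) {δ : ℝ} (hδ : 0 ≤ δ) :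
    ‖circleMap w δ w.arg‖ = ‖w‖ + δ := by
  have hw : circleMap w δ w.arg = ((‖w‖ + δ : ℝ) : ℂ) * Complex.exp (w.arg * Complex.I) := by
    rw [circleMap]
    nth_rewrite 1 [← Complex.norm_mul_exp_arg_mul_I w]
    push_cast; ring
  rw [hw, norm_mul, Complex.norm_exp_ofReal_mul_I, mul_one, Complex.norm_real, Real.norm_eq_abs,
    abs_of_nonneg (by positivity)]

theorem IsCompact.le_of_forall_frontier_le_of_le_circleAverage {K : Set ℂ} (hK : IsCompact K)
    {h : ℂ → ℝ} (hh : ContinuousOn h K)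
    (hsub : ∀ w (δ : ℝ), 0 < δ → closedBall w δ ⊆ K → h w ≤ circleAverage h w δ)
    {m : ℝ} (hm : ∀ w ∈ frontier K, h w ≤ m) {z : ℂ} (hz : z ∈ K) : h z ≤ m := by
  obtain ⟨w₀, hw₀K, hmax, hfar⟩ := hK.exists_isMaxOn_lex ⟨z, hz⟩ hh continuous_norm.continuousOn
  refine (hmax hz).trans ?_
  by_cases hfr : w₀ ∈ frontier K
  · exact hm w₀ hfr
  -- An interior maximiser of largest norm is impossible: `h` is maximal on the whole circle
  -- around it, which contains points of larger norm.
  obtain ⟨δ, hδ, hball⟩ : ∃ δ > 0, closedBall w₀ δ ⊆ K := by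
    have : w₀ ∈ interior K := by
      rw [hK.isClosed.frontier_eq] at hfr
      by_contra hint
      exact hfr ⟨hw₀K, hint⟩
    exact nhds_basis_closedBall.mem_iff.mp (mem_interior_iff_mem_nhds.mp this)
  have hsphere : sphere w₀ |δ| ⊆ K := (abs_of_pos hδ).symm ▸ sphere_subset_closedBall.trans hball
  have heq := eq_on_sphere_of_le_circleAverage (hh.mono hsphere)
    (fun w hw ↦ hmax (hsphere hw)) (hsub w₀ δ hδ hball)
  have hw₁ := circleMap_mem_sphere' w₀ δ w₀.arg
  have hnorm : ‖circleMap w₀ δ w₀.arg‖ ≤ ‖w₀‖ := hfar ⟨hsphere hw₁, heq _ hw₁⟩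
  rw [norm_circleMap_arg w₀ hδ.le] at hnorm
  linarith

theorem circleAverage_log_norm_of_abs_lt {w : ℂ} {δ : ℝ} (hδ : |δ| < ‖w‖) :
    circleAverage (fun v ↦ log ‖v‖) w δ = log ‖w‖ := by
  refine InnerProductSpace.HarmonicOnNhd.circleAverage_eq fun v hv ↦
    analyticAt_id.harmonicAt_log_norm ?_
  rintro rfl
  rw [mem_closedBall, dist_zero_left] at hv
  exact hv.not_gt hδ

theorem le_circleAverage_sub_mul_log_norm {u : ℂ → ℝ} {w : ℂ} {δ : ℝ}
    (hui : CircleIntegrable u w δ) (hu : u w ≤ circleAverage u w δ) (hδ : |δ| < ‖w‖) (ε : ℝ) :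
    u w - ε * log ‖w‖ ≤ circleAverage (fun v ↦ u v - ε * log ‖v‖) w δ := by
  have hlog : CircleIntegrable (fun v ↦ ε * log ‖v‖) w δ := by
    have := (circleIntegrable_log_norm_sub_const (a := 0) (c := w) δ).const_mul ε
    simp only [sub_zero] at this
    exact this
  have hmean : circleAverage (fun v ↦ ε * log ‖v‖) w δ = ε * log ‖w‖ := by
    rw [← circleAverage_log_norm_of_abs_lt hδ]
    exact circleAverage_fun_smul (𝕜 := ℝ) (a := ε)
  rw [circleAverage_fun_sub hui hlog, hmean]
  linarith

theorem le_add_mul_log_norm_of_le_circleAverage {u : ℂ → ℝ} (hu : Continuous u)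
    (hsub : ∀ z (r : ℝ), 0 < r → u z ≤ circleAverage u z r) {B m ε : ℝ} (hB : ∀ z, u z ≤ B)
    (hm : ∀ w, ‖w‖ = 1 → u w ≤ m) (hε : 0 < ε) {z : ℂ} (hz : 1 ≤ ‖z‖) :
    u z ≤ m + ε * log ‖z‖ := by
  set R := max ‖z‖ (exp ((B - m) / ε))
  set K := closedBall (0 : ℂ) R \ ball 0 1
  have hK : ∀ {w : ℂ}, w ∈ K ↔ 1 ≤ ‖w‖ ∧ ‖w‖ ≤ R := by simp [K, and_comm]
  have hfrontier : ∀ w ∈ frontier K, ‖w‖ = 1 ∨ ‖w‖ = R := by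
    intro w hw
    rcases frontier_inter_subset (closedBall (0 : ℂ) R) (ball 0 1)ᶜ hw with ⟨hR, -⟩ | ⟨-, h1⟩
    · rw [frontier_closedBall' (0 : ℂ) R, mem_sphere_zero_iff_norm] at hR
      exact Or.inr hR
    · rw [frontier_compl, frontier_ball (0 : ℂ) one_ne_zero, mem_sphere_zero_iff_norm] at h1
      exact Or.inl h1
  have hlogR : B - m ≤ ε * log R := by
    rw [← div_le_iff₀' hε, le_log_iff_exp_le (by positivity)]
    exact le_max_right _ _
  suffices u z - ε * log ‖z‖ ≤ m by linarith
  refine ((isCompact_closedBall 0 R).diff isOpen_ball).le_of_forall_frontier_le_of_le_circleAverage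
    (h := fun w ↦ u w - ε * log ‖w‖) ?_ ?_ ?_ (hK.mpr ⟨hz, le_max_left _ _⟩)
  · refine hu.continuousOn.sub (continuousOn_const.mul (continuous_norm.continuousOn.log ?_))
    exact fun w hw ↦ (zero_lt_one.trans_le (hK.mp hw).1).ne'
  · intro w δ hδ hball
    have hδw : |δ| < ‖w‖ := by
      by_contra! hle
      have h0 : (0 : ℂ) ∈ closedBall w δ := by
        rwa [mem_closedBall, dist_zero_left, ← abs_of_pos hδ]
      linarith [(hK.mp (hball h0)).1, norm_zero (E := ℂ)]
    exact le_circleAverage_sub_mul_log_norm hu.continuousOn.circleIntegrable' (hsub w δ hδ) hδw ε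
  · intro w hw
    rcases hfrontier w hw with h1 | hR
    · simpa [h1] using hm w h1
    · rw [hR]
      linarith [hB w]

theorem le_of_forall_norm_eq_one_le_of_le_circleAverage {u : ℂ → ℝ} (hu : Continuous u)
    (hsub : ∀ z (r : ℝ), 0 < r → u z ≤ circleAverage u z r) {B m : ℝ} (hB : ∀ z, u z ≤ B)
    (hm : ∀ w, ‖w‖ = 1 → u w ≤ m) {z : ℂ} (hz : 1 ≤ ‖z‖) :
    u z ≤ m := by
  have hlim : Tendsto (fun ε : ℝ ↦ m + ε * log ‖z‖) (𝓝[>] 0) (𝓝 m) := by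
    have : Continuous fun ε : ℝ ↦ m + ε * log ‖z‖ := by fun_prop
    simpa using (this.continuousWithinAt (s := Ioi 0) (x := 0)).tendsto
  exact ge_of_tendsto hlim <| eventually_nhdsWithin_of_forall fun ε hε ↦
    le_add_mul_log_norm_of_le_circleAverage hu hsub hB hm hε hz

theorem eq_of_forall_le_of_le_circleAverage {u : ℂ → ℝ} (hu : Continuous u) {z₀ : ℂ}
    (hmax : ∀ z, u z ≤ u z₀) (hsub : ∀ r : ℝ, 0 < r → u z₀ ≤ circleAverage u z₀ r) (z : ℂ) :
    u z = u z₀ := by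
  rcases eq_or_ne z z₀ with rfl | hne
  · rfl
  have hz : z ∈ sphere z₀ |‖z - z₀‖| := by rw [abs_norm, mem_sphere_iff_norm]
  exact eq_on_sphere_of_le_circleAverage hu.continuousOn (fun w _ ↦ hmax w)
    (hsub _ (norm_pos_iff.mpr (sub_ne_zero.mpr hne))) z hz

theorem eq_of_le_circleAverage_of_bddAbove {u : ℂ → ℝ} (hu : Continuous u)
    (hsub : ∀ z (r : ℝ), 0 < r → u z ≤ circleAverage u z r) (hbdd : BddAbove (range u))
    (z w : ℂ) : u z = u w := by
  obtain ⟨B, hB⟩ := hbdd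
  obtain ⟨z₀, -, hz₀⟩ := (isCompact_closedBall (0 : ℂ) 1).exists_isMaxOn
    (nonempty_closedBall.mpr zero_le_one) hu.continuousOn
  have hmax : ∀ z, u z ≤ u z₀ := by
    intro z
    rcases le_total ‖z‖ 1 with hz | hz
    · exact hz₀ (mem_closedBall_zero_iff.mpr hz)
    · exact le_of_forall_norm_eq_one_le_of_le_circleAverage hu hsub (fun z ↦ hB (mem_range_self z))
        (fun w hw ↦ hz₀ (mem_closedBall_zero_iff.mpr hw.le)) hz
  rw [eq_of_forall_le_of_le_circleAverage hu hmax (hsub z₀) z,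
    eq_of_forall_le_of_le_circleAverage hu hmax (hsub z₀) w]

theorem SubharmonicFun.le_circleAverage {u : ℂ → ℝ} (hu : SubharmonicFun u) (z : ℂ) {r : ℝ}
    (hr : 0 < r) : u z ≤ circleAverage u z r := by
  rw [circleAverage_def, smul_eq_mul, inv_eq_one_div]
  exact hu.2 z r hr

/-- if `F : ℂ → M` is holomorphic with dense image, then every
negative continuous plurisubharmonic function on `M` (i.e. whose pullback under
every holomorphic map from ℂ is subharmonic) is constant. -/
theorem neg_cont_psh_constant_of_dominated_by_C {E : Type*} [NormedAddCommGroup E]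
    [NormedSpace ℂ E] {M : Type*} [TopologicalSpace M] [ChartedSpace E M]
    (F : ℂ → M) (hF : MDifferentiable 𝓘(ℂ, ℂ) 𝓘(ℂ, E) F) (hdense : DenseRange F)
    (ψ : M → ℝ) (hψcont : Continuous ψ) (hψneg : ∀ x, ψ x < 0)
    (hψpsh : ∀ g : ℂ → M, MDifferentiable 𝓘(ℂ, ℂ) 𝓘(ℂ, E) g → SubharmonicFun (ψ ∘ g)) :
    ∀ x y, ψ x = ψ y := by
  have hconst : ∀ z w, (ψ ∘ F) z = (ψ ∘ F) w :=
    eq_of_le_circleAverage_of_bddAbove (hψcont.comp hF.continuous)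
      (fun z _ hr ↦ (hψpsh F hF).le_circleAverage z hr)
      ⟨0, forall_mem_range.mpr fun z ↦ (hψneg (F z)).le⟩
  have hψ : ψ = fun _ ↦ ψ (F 0) :=
    hψcont.ext_on hdense continuous_const fun _ ⟨z, hz⟩ ↦ hz ▸ hconst z 0
  exact fun x y ↦ by rw [hψ]
end

section
/- Let M_1, M_2 be complex manifolds. There exists a holomorphic map C → M_1 × M_2 with dense image if and only if there exist holomorphic maps C^k → M_1 and C^k → M_2 with dense images for some k (equivalently: the product is dominated by C iff each factor is, granting that domination by C is equivalent to domination by some C^m). -/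
/-!
If `ℂ` dominates `M₁ × M₂`, composing with the projections and with a linear surjection
`ℂ¹ → ℂ` shows that `ℂ¹` dominates each factor. Conversely, domination is transitive and
compatible with products, so it suffices that `ℂ` dominates `ℂᵏ × ℂᵏ`. Any separable
complex Banach space carries a dense entire curve `t ↦ ∑ₘ exp (-(t - m²)²) • uₘ`, where
`‖uₘ‖ ≤ m` and `u` comes arbitrarily close to every point infinitely often: on `‖t‖ ≤ R`
the `m`-th bump is at most `exp (R² - m⁴ / 2)`, so the series is entire, and at the node
`t = j²` all bumps but the `j`-th are at most `exp (-j - m)`, so the curve passes within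
`O(exp (-j))` of `uⱼ`.
-/

open scoped Manifold Topology
open Filter

section DenseEntireCurve

variable {E : Type*} [NormedAddCommGroup E]

theorem exists_seq_norm_le_frequently_near [TopologicalSpace.SeparableSpace E] :
    ∃ u : ℕ → E, (∀ m, ‖u m‖ ≤ m) ∧ ∀ x, ∀ ε > 0, ∃ᶠ m in atTop, dist (u m) x < ε := by
  obtain ⟨w, hw⟩ := TopologicalSpace.exists_dense_seq E
  -- `w i` is listed at every index `Nat.pair i n` large enough to exceed its norm.
  refine ⟨fun m => if ‖w m.unpair.1‖ ≤ m then w m.unpair.1 else 0, fun m => ?_,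
    fun x ε hε => ?_⟩
  · dsimp only
    split_ifs with h
    · exact h
    · simp
  obtain ⟨i, hi⟩ := Metric.denseRange_iff.1 hw x ε hε
  refine frequently_atTop.2 fun N => ⟨Nat.pair i (max N ⌈‖w i‖⌉₊), ?_, ?_⟩
  · exact (le_max_left _ _).trans (Nat.right_le_pair _ _)
  · have hnorm : ‖w i‖ ≤ (Nat.pair i (max N ⌈‖w i‖⌉₊) : ℝ) :=
      (Nat.le_ceil _).trans <| by
        exact_mod_cast (le_max_right _ _).trans (Nat.right_le_pair _ _)
    simpa [hnorm, dist_comm] using hi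

theorem norm_exp_neg_sq_sub_le (t : ℂ) (a : ℝ) :
    ‖Complex.exp (-(t - a) ^ 2)‖ ≤ Real.exp (‖t‖ ^ 2 - a ^ 2 / 2) := by
  rw [Complex.norm_exp, Real.exp_le_exp, Complex.sq_norm, Complex.normSq_apply]
  simp only [Complex.neg_re, sq, Complex.mul_re, Complex.sub_re, Complex.sub_im,
    Complex.ofReal_re, Complex.ofReal_im]
  nlinarith [sq_nonneg (t.re - a / 2)]

theorem add_le_sq_sub_sq_sq {j m : ℕ} (h : j ≠ m) :
    (j : ℝ) + m ≤ ((j : ℝ) ^ 2 - (m : ℝ) ^ 2) ^ 2 := by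
  have hd : (1 : ℤ) ≤ ((j : ℤ) - m) ^ 2 := by
    have := Int.one_le_abs ((sub_ne_zero.2 (Nat.cast_injective.ne h) : (j : ℤ) - m ≠ 0))
    nlinarith [sq_abs ((j : ℤ) - m)]
  have hs : (1 : ℤ) ≤ j + m := by omega
  have : (j : ℤ) + m ≤ ((j : ℤ) ^ 2 - (m : ℤ) ^ 2) ^ 2 :=
    calc (j : ℤ) + m ≤ 1 * (j + m) ^ 2 := by nlinarith
      _ ≤ ((j : ℤ) - m) ^ 2 * (j + m) ^ 2 := by gcongr
      _ = ((j : ℤ) ^ 2 - (m : ℤ) ^ 2) ^ 2 := by ring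
  exact_mod_cast this

variable [NormedSpace ℂ E]

noncomputable def gaussianBumpSeries (u : ℕ → E) (t : ℂ) : E :=
  ∑' m : ℕ, Complex.exp (-(t - ((m ^ 2 : ℕ) : ℝ)) ^ 2) • u m

theorem norm_gaussianBump_smul_le {u : ℕ → E} (hu : ∀ m, ‖u m‖ ≤ m) {t : ℂ} {R : ℝ}
    (ht : ‖t‖ ≤ R) (m : ℕ) :
    ‖Complex.exp (-(t - ((m ^ 2 : ℕ) : ℝ)) ^ 2) • u m‖ ≤
      Real.exp (R ^ 2) * ((m : ℝ) * Real.exp (-(1 / 2) * m)) := by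
  have hexp : ‖t‖ ^ 2 - ((m ^ 2 : ℕ) : ℝ) ^ 2 / 2 ≤ R ^ 2 + -(1 / 2) * m := by
    have hm : (m : ℝ) ≤ ((m ^ 2 : ℕ) : ℝ) ^ 2 := by
      have : m ≤ (m ^ 2) ^ 2 := by rw [← pow_mul]; exact Nat.le_self_pow (by norm_num) m
      exact_mod_cast this
    nlinarith [pow_le_pow_left₀ (norm_nonneg t) ht 2]
  rw [norm_smul, mul_comm (m : ℝ), ← mul_assoc, ← Real.exp_add]
  exact mul_le_mul ((norm_exp_neg_sq_sub_le _ _).trans (Real.exp_le_exp.2 hexp)) (hu m)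
    (norm_nonneg _) (Real.exp_nonneg _)

theorem summable_exp_sq_mul_natCast_mul_exp (R : ℝ) :
    Summable fun m : ℕ => Real.exp (R ^ 2) * ((m : ℝ) * Real.exp (-(1 / 2) * m)) := by
  simpa using (Real.summable_pow_mul_exp_neg_nat_mul 1 (by norm_num : (0 : ℝ) < 1 / 2)).mul_left
    (Real.exp (R ^ 2))

variable [CompleteSpace E] {u : ℕ → E}

theorem differentiable_gaussianBumpSeries (hu : ∀ m, ‖u m‖ ≤ m) :
    Differentiable ℂ (gaussianBumpSeries u) := by
  intro z
  have hball : DifferentiableOn ℂ (gaussianBumpSeries u) (Metric.ball 0 (‖z‖ + 1)) :=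
    Complex.differentiableOn_tsum_of_summable_norm (summable_exp_sq_mul_natCast_mul_exp _)
      (fun m => by fun_prop) Metric.isOpen_ball
      (fun m t ht => norm_gaussianBump_smul_le hu (mem_ball_zero_iff.1 ht).le m)
  exact hball.differentiableAt (Metric.isOpen_ball.mem_nhds (by simp))

theorem norm_gaussianBumpSeries_node_sub_le (hu : ∀ m, ‖u m‖ ≤ m) (j : ℕ) :
    ‖gaussianBumpSeries u ((j ^ 2 : ℕ) : ℝ) - u j‖ ≤
      Real.exp (-j) * ∑' m : ℕ, (m : ℝ) * Real.exp (-m) := by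
  have hsum : Summable fun m : ℕ =>
      Complex.exp (-((((j ^ 2 : ℕ) : ℝ) : ℂ) - ((m ^ 2 : ℕ) : ℝ)) ^ 2) • u m :=
    (summable_exp_sq_mul_natCast_mul_exp _).of_norm_bounded
      (norm_gaussianBump_smul_le hu le_rfl)
  rw [gaussianBumpSeries, hsum.tsum_eq_add_tsum_ite j]
  simp only [sub_self, ne_eq, OfNat.ofNat_ne_zero, not_false_eq_true, zero_pow, neg_zero,
    Complex.exp_zero, one_smul, add_sub_cancel_left]
  have hweights : Summable fun m : ℕ => (m : ℝ) * Real.exp (-m) := by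
    simpa using Real.summable_pow_mul_exp_neg_nat_mul 1 one_pos
  refine tsum_of_norm_bounded (hweights.hasSum.mul_left _) fun m => ?_
  split_ifs with hm
  · simp only [norm_zero]; positivity
  · have hexp : ‖Complex.exp (-((((j ^ 2 : ℕ) : ℝ) : ℂ) - ((m ^ 2 : ℕ) : ℝ)) ^ 2)‖ ≤
        Real.exp (-j) * Real.exp (-m) := by
      rw [Complex.norm_exp, ← Real.exp_add, Real.exp_le_exp, ← Complex.ofReal_sub,
        ← Complex.ofReal_pow, ← Complex.ofReal_neg, Complex.ofReal_re]
      have := add_le_sq_sub_sq_sq (Ne.symm hm)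
      push_cast
      linarith
    rw [norm_smul, mul_comm (m : ℝ), ← mul_assoc]
    exact mul_le_mul hexp (hu m) (norm_nonneg _) (by positivity)

end DenseEntireCurve

theorem exists_differentiable_denseRange (E : Type*) [NormedAddCommGroup E] [NormedSpace ℂ E]
    [CompleteSpace E] [TopologicalSpace.SeparableSpace E] :
    ∃ g : ℂ → E, Differentiable ℂ g ∧ DenseRange g := by
  obtain ⟨u, hu, hnear⟩ := exists_seq_norm_le_frequently_near (E := E)
  set g := gaussianBumpSeries u
  refine ⟨g, differentiable_gaussianBumpSeries hu, Metric.denseRange_iff.2 fun x r hr => ?_⟩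
  have hclose : Tendsto (fun j : ℕ => dist (g ((j ^ 2 : ℕ) : ℝ)) (u j)) atTop (𝓝 0) := by
    refine squeeze_zero (fun _ => dist_nonneg)
      (fun j => (dist_eq_norm _ _).trans_le (norm_gaussianBumpSeries_node_sub_le hu j)) ?_
    simpa using (Real.tendsto_exp_neg_atTop_nhds_zero.comp
      tendsto_natCast_atTop_atTop).mul_const (∑' m : ℕ, (m : ℝ) * Real.exp (-m))
  obtain ⟨j, hxj, hjg⟩ := ((hnear x (r / 2) (half_pos hr)).and_eventually
    ((tendsto_order.1 hclose).2 _ (half_pos hr))).exists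
  refine ⟨((j ^ 2 : ℕ) : ℝ), ?_⟩
  calc dist x (g ((j ^ 2 : ℕ) : ℝ)) ≤ dist x (u j) + dist (u j) (g ((j ^ 2 : ℕ) : ℝ)) :=
        dist_triangle _ _ _
    _ < r := by linarith [dist_comm x (u j), dist_comm (u j) (g ((j ^ 2 : ℕ) : ℝ))]

section Dominates

variable {𝕜 : Type*} [NontriviallyNormedField 𝕜]
  {E : Type*} [NormedAddCommGroup E] [NormedSpace 𝕜 E] {H : Type*} [TopologicalSpace H]
  {I : ModelWithCorners 𝕜 E H}
  {E' : Type*} [NormedAddCommGroup E'] [NormedSpace 𝕜 E'] {H' : Type*} [TopologicalSpace H']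
  {I' : ModelWithCorners 𝕜 E' H'}
  {F : Type*} [NormedAddCommGroup F] [NormedSpace 𝕜 F] {G : Type*} [TopologicalSpace G]
  {J : ModelWithCorners 𝕜 F G}
  {F' : Type*} [NormedAddCommGroup F'] [NormedSpace 𝕜 F'] {G' : Type*} [TopologicalSpace G']
  {J' : ModelWithCorners 𝕜 F' G'}
  {N : Type*} [TopologicalSpace N] [ChartedSpace H N] {M : Type*} [TopologicalSpace M]
  [ChartedSpace H' M] {P : Type*} [TopologicalSpace P] [ChartedSpace G P]
  {Q : Type*} [TopologicalSpace Q] [ChartedSpace G' Q]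

variable (I I' N M) in
def Dominates : Prop := ∃ f : N → M, MDifferentiable I I' f ∧ DenseRange f

theorem Dominates.trans (h₁ : Dominates I I' N M) (h₂ : Dominates I' J M P) :
    Dominates I J N P := by
  obtain ⟨f, hf, hfd⟩ := h₁
  obtain ⟨g, hg, hgd⟩ := h₂
  exact ⟨g ∘ f, hg.comp hf, hgd.comp hfd hg.continuous⟩

theorem dominates_of_surjective {f : N → M} (hf : MDifferentiable I I' f)
    (hsurj : Function.Surjective f) : Dominates I I' N M :=
  ⟨f, hf, hsurj.denseRange⟩

theorem Dominates.prodMap (h₁ : Dominates I J N P) (h₂ : Dominates I' J' M Q) :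
    Dominates (I.prod I') (J.prod J') (N × M) (P × Q) := by
  obtain ⟨f, hf, hfd⟩ := h₁
  obtain ⟨g, hg, hgd⟩ := h₂
  exact ⟨Prod.map f g, hf.prodMap hg, hfd.prodMap hgd⟩

theorem Dominates.fst [Nonempty N] (h : Dominates I (I'.prod J) N (M × P)) :
    Dominates I I' N M := by
  have : Nonempty P := let ⟨f, _⟩ := h; ⟨(f (Classical.arbitrary N)).2⟩
  exact h.trans (dominates_of_surjective mdifferentiable_fst Prod.fst_surjective)

theorem Dominates.snd [Nonempty N] (h : Dominates I (I'.prod J) N (M × P)) :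
    Dominates I J N P := by
  have : Nonempty M := let ⟨f, _⟩ := h; ⟨(f (Classical.arbitrary N)).1⟩
  exact h.trans (dominates_of_surjective mdifferentiable_snd Prod.snd_surjective)

end Dominates

theorem dominates_complex_prod (V W : Type*) [NormedAddCommGroup V] [NormedSpace ℂ V]
    [CompleteSpace V] [TopologicalSpace.SeparableSpace V] [NormedAddCommGroup W]
    [NormedSpace ℂ W] [CompleteSpace W] [TopologicalSpace.SeparableSpace W] :
    Dominates 𝓘(ℂ, ℂ) (𝓘(ℂ, V).prod 𝓘(ℂ, W)) ℂ (V × W) := by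
  obtain ⟨g, hg, hgd⟩ := exists_differentiable_denseRange (V × W)
  exact ⟨g, hg.fst.mdifferentiable.prodMk hg.snd.mdifferentiable, hgd⟩

theorem dominates_euclideanSpace_fin_one_complex :
    Dominates 𝓘(ℂ, EuclideanSpace ℂ (Fin 1)) 𝓘(ℂ, ℂ) (EuclideanSpace ℂ (Fin 1)) ℂ :=
  dominates_of_surjective (f := fun x : EuclideanSpace ℂ (Fin 1) => x 0)
    (EuclideanSpace.proj (𝕜 := ℂ) (0 : Fin 1)).differentiable.mdifferentiable
    fun z => ⟨WithLp.toLp 2 fun _ => z, rfl⟩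

/-- a product `M₁ × M₂` of complex manifolds is dominated by ℂ if
and only if, for some `k`, both factors are dominated by ℂᵏ. -/
theorem product_dominated_iff {E₁ E₂ : Type*} [NormedAddCommGroup E₁]
    [NormedSpace ℂ E₁] [NormedAddCommGroup E₂] [NormedSpace ℂ E₂]
    {M₁ M₂ : Type*} [TopologicalSpace M₁] [ChartedSpace E₁ M₁]
    [TopologicalSpace M₂] [ChartedSpace E₂ M₂] :
    (∃ F : ℂ → M₁ × M₂,
        MDifferentiable 𝓘(ℂ, ℂ) (𝓘(ℂ, E₁).prod 𝓘(ℂ, E₂)) F ∧ DenseRange F) ↔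
      (∃ k : ℕ,
        (∃ F₁ : EuclideanSpace ℂ (Fin k) → M₁,
            MDifferentiable 𝓘(ℂ, EuclideanSpace ℂ (Fin k)) 𝓘(ℂ, E₁) F₁ ∧
              DenseRange F₁) ∧
        (∃ F₂ : EuclideanSpace ℂ (Fin k) → M₂,
            MDifferentiable 𝓘(ℂ, EuclideanSpace ℂ (Fin k)) 𝓘(ℂ, E₂) F₂ ∧
              DenseRange F₂)) := by
  change Dominates _ _ ℂ (M₁ × M₂) ↔ ∃ k, Dominates _ _ (EuclideanSpace ℂ (Fin k)) M₁ ∧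
    Dominates _ _ (EuclideanSpace ℂ (Fin k)) M₂
  constructor
  · intro h
    have h' := dominates_euclideanSpace_fin_one_complex.trans h
    exact ⟨1, h'.fst, h'.snd⟩
  · rintro ⟨k, h₁, h₂⟩
    exact (dominates_complex_prod _ _).trans (h₁.prodMap h₂)
end
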